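/- arXiv:2012.07298 — 8 statements merged into one kernel-verified Lean document; each statement's English description precedes it below -/
import Mathlib

section
/- Let $\mathcal{E}$ be a coarse structure on $X$, $\mathcal{I}^\mathcal{E} := \{E\in\mathcal{E}: E^{-1}=E, \Delta_X\subseteq E\}$ ordered by inclusion, and define $\mathbf{d}^\mathcal{E}(x,y) := \Delta_X\cup\{(x,y),(y,x)\}$ if $(x,y)$ belongs to some member of $\mathcal{E}$, and $\mathbf{d}^\mathcal{E}(x,y):=\infty$ otherwise. Then $\mathbf{d}^\mathcal{E}$ is a coarse $\mathcal{I}^\mathcal{E}$-metric (with witnessing function $\Phi(E)=E\circ E$), and for every $E\in\mathcal{I}^\mathcal{E}$ one has $E = \{(x,y)\in X\times X : \mathbf{d}^\mathcal{E}(x,y)\leq E\}$. -/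
open Set

/-- The diagonal of `X × X`. -/
def relDiag (X : Type*) : Set (X × X) := {p | p.1 = p.2}

/-- The inverse of a relation. -/
def relInv {X : Type*} (A : Set (X × X)) : Set (X × X) := {p | (p.2, p.1) ∈ A}

/-- The product (composition) of two relations. -/
def relComp {X : Type*} (A B : Set (X × X)) : Set (X × X) :=
  {p | ∃ y, (p.1, y) ∈ A ∧ (y, p.2) ∈ B}

/-- A coarse structure on `X`: contains the diagonal, closed under subsets,
inverses, products and finite unions. -/
def IsCoarseStructure {X : Type*} (E : Set (Set (X × X))) : Prop :=
  relDiag X ∈ E ∧ (∀ A ∈ E, ∀ B, B ⊆ A → B ∈ E) ∧ (∀ A ∈ E, relInv A ∈ E) ∧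
  (∀ A ∈ E, ∀ B ∈ E, relComp A B ∈ E) ∧ (∀ A ∈ E, ∀ B ∈ E, A ∪ B ∈ E)

/-- A uniform structure on `X`. -/
def IsUniformStructure {X : Type*} (U : Set (Set (X × X))) : Prop :=
  (∀ V ∈ U, relDiag X ⊆ V) ∧ (∀ V ∈ U, ∀ W, V ⊆ W → W ∈ U) ∧
  (∀ V ∈ U, ∀ W ∈ U, V ∩ W ∈ U) ∧ (∀ V ∈ U, relInv V ∈ U) ∧
  (∀ V ∈ U, ∃ W ∈ U, relComp W W ⊆ V)

/-- The entourage `D_α = {(x,y) : d(x,y) ≤ α}`. -/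
def DD {X I : Type*} [Preorder I] (d : X → X → WithTop I) (α : I) : Set (X × X) :=
  {p | d p.1 p.2 ≤ (α : WithTop I)}

/-- The coarse structure induced by a (coarse) metric: all subsets of the sets `D_α`. -/
def coarseOf {X I : Type*} [Preorder I] (d : X → X → WithTop I) : Set (Set (X × X)) :=
  {A | ∃ α : I, A ⊆ DD d α}

/-- A coarse `I`-metric: symmetric, zero on the diagonal, with a growth map `Φ`. -/
def IsCoarseMetric {X I : Type*} [Preorder I] [OrderBot I] (d : X → X → WithTop I) : Prop :=
  (∀ x, d x x = ((⊥ : I) : WithTop I)) ∧ (∀ x y, d x y = d y x) ∧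
  ∃ Φ : I → I, ∀ α : I, relComp (DD d α) (DD d α) ⊆ DD d (Φ α)

/-- `𝒯_s`: the symmetrization `(A ∩ A⁻¹) ∪ Δ_X` of the members of `𝒯`. -/
def symPart {X : Type*} (T : Set (Set (X × X))) : Set (Set (X × X)) :=
  (fun A => (A ∩ relInv A) ∪ relDiag X) '' T

/-- `\overline{𝒯}`: all intersections of nonempty subfamilies of `𝒯_s`. -/
def interClos {X : Type*} (T : Set (Set (X × X))) : Set (Set (X × X)) :=
  {C | ∃ S : Set (Set (X × X)), S.Nonempty ∧ S ⊆ symPart T ∧ C = ⋂₀ S}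

/-- the canonical map `dᵉ` is a coarse `Iᵉ`-metric (with witnessing
function `Φ(E) = E ∘ E`), and `E = {(x,y) : dᵉ(x,y) ≤ E}` for every `E ∈ Iᵉ`. -/
theorem stmt6 {X : Type*} (E : Set (Set (X × X))) (hE : IsCoarseStructure E)
    (dE : X → X → WithTop (Set (X × X)))
    (hd1 : ∀ x y : X, (∃ A ∈ E, (x, y) ∈ A) →
      dE x y = ((relDiag X ∪ {(x, y), (y, x)} : Set (X × X)) : WithTop (Set (X × X))))
    (hd2 : ∀ x y : X, (¬ ∃ A ∈ E, (x, y) ∈ A) → dE x y = ⊤) :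
    (∀ x : X, dE x x = ((relDiag X : Set (X × X)) : WithTop (Set (X × X)))) ∧
    (∀ x y : X, dE x y = dE y x) ∧
    (∀ x y : X, dE x y ≠ ⊤ →
      ∃ A : Set (X × X), dE x y = (A : WithTop (Set (X × X))) ∧
        A ∈ E ∧ relInv A = A ∧ relDiag X ⊆ A) ∧
    (∀ A : Set (X × X), A ∈ E → relInv A = A → relDiag X ⊆ A →
      (relComp A A ∈ E ∧ relInv (relComp A A) = relComp A A ∧ relDiag X ⊆ relComp A A) ∧
      (∀ x y z : X, dE x y ≤ (A : WithTop (Set (X × X))) →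
        dE y z ≤ (A : WithTop (Set (X × X))) →
        dE x z ≤ ((relComp A A : Set (X × X)) : WithTop (Set (X × X)))) ∧
      A = {p : X × X | dE p.1 p.2 ≤ (A : WithTop (Set (X × X)))}) := by
  obtain ⟨hdiag, hsub, hinv, hcomp, hun⟩ := hE
  -- symmetry of the existence condition
  have hex : ∀ x y : X, (∃ A ∈ E, (x, y) ∈ A) → (∃ A ∈ E, (y, x) ∈ A) := by
    rintro x y ⟨A, hA, hxy⟩
    exact ⟨relInv A, hinv A hA, hxy⟩
  have hdsym : ∀ x y : X, dE x y = dE y x := by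
    intro x y
    by_cases h : ∃ A ∈ E, (x, y) ∈ A
    · rw [hd1 x y h, hd1 y x (hex x y h)]
      congr 1
      rw [Set.pair_comm]
    · have h' : ¬ ∃ A ∈ E, (y, x) ∈ A := fun h' => h (hex y x h')
      rw [hd2 x y h, hd2 y x h']
  refine ⟨?_, hdsym, ?_, ?_⟩
  · intro x
    rw [hd1 x x ⟨relDiag X, hdiag, rfl⟩]
    congr 1
    have : ({(x, x), (x, x)} : Set (X × X)) ⊆ relDiag X := by
      intro p hp
      rcases hp with hp | hp <;> simp_all [relDiag]
    rw [Set.union_eq_self_of_subset_right this]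
  · intro x y h
    have hxy : ∃ A ∈ E, (x, y) ∈ A := by
      by_contra h'
      exact h (hd2 x y h')
    obtain ⟨A, hA, hmem⟩ := hxy
    refine ⟨relDiag X ∪ {(x, y), (y, x)}, hd1 x y ⟨A, hA, hmem⟩, ?_, ?_, Set.subset_union_left⟩
    · -- membership in E
      have h1 : (relDiag X ∪ {(x, y), (y, x)} : Set (X × X)) ⊆
          relDiag X ∪ (A ∪ relInv A) := by
        intro p hp
        rcases hp with hp | hp
        · exact Or.inl hp
        · rcases hp with hp | hp
          · exact Or.inr (Or.inl (hp ▸ hmem))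
          · refine Or.inr (Or.inr ?_)
            simp only [Set.mem_singleton_iff] at hp
            subst hp
            exact hmem
      exact hsub _ (hun _ hdiag _ (hun _ hA _ (hinv A hA))) _ h1
    · -- symmetric
      ext ⟨a, b⟩
      constructor <;> intro hp <;>
      · rcases hp with hp | hp
        · exact Or.inl (by simpa [relDiag, eq_comm] using hp)
        · rcases hp with hp | hp
          · simp only [Prod.mk.injEq] at hp
            exact Or.inr (by simp [relInv, hp.1, hp.2])
          · simp only [Set.mem_singleton_iff, Prod.mk.injEq, relInv] at hp ⊢
            exact Or.inr (by simp [hp.1, hp.2])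
  · intro A hA hAinv hAdiag
    have hcompmem : relComp A A ∈ E := hcomp A hA A hA
    have hcompdiag : relDiag X ⊆ relComp A A := by
      rintro ⟨a, b⟩ hab
      have : a = b := hab
      subst this
      exact ⟨a, hAdiag rfl, hAdiag rfl⟩
    have hcompsym : relInv (relComp A A) = relComp A A := by
      ext ⟨a, b⟩
      constructor
      · rintro ⟨y, h1, h2⟩
        refine ⟨y, ?_, ?_⟩
        · rw [← hAinv]; exact h2
        · rw [← hAinv]; exact h1
      · rintro ⟨y, h1, h2⟩
        refine ⟨y, ?_, ?_⟩
        · rw [← hAinv]; exact h2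
        · rw [← hAinv]; exact h1
    -- key: dE x y ≤ ↑A ↔ (x,y) ∈ A
    have hkey : ∀ x y : X, dE x y ≤ (A : WithTop (Set (X × X))) ↔ (x, y) ∈ A := by
      intro x y
      constructor
      · intro h
        have hne : dE x y ≠ ⊤ := fun ht => by
          rw [ht] at h
          exact (WithTop.not_top_le_coe A) h
        have hxy : ∃ B ∈ E, (x, y) ∈ B := by
          by_contra h'
          exact hne (hd2 x y h')
        rw [hd1 x y hxy] at h
        rw [WithTop.coe_le_coe] at h
        exact h (Or.inr (Or.inl rfl))
      · intro h
        rw [hd1 x y ⟨A, hA, h⟩, WithTop.coe_le_coe]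
        intro p hp
        rcases hp with hp | hp
        · exact hAdiag hp
        · rcases hp with hp | hp
          · exact hp ▸ h
          · simp only [Set.mem_singleton_iff] at hp
            subst hp
            rw [← hAinv]; exact h
    refine ⟨⟨hcompmem, hcompsym, hcompdiag⟩, ?_, ?_⟩
    · intro x y z hxy hyz
      have h1 : (x, y) ∈ A := (hkey x y).1 hxy
      have h2 : (y, z) ∈ A := (hkey y z).1 hyz
      have hxz : (x, z) ∈ relComp A A := ⟨y, h1, h2⟩
      have hzx : (z, x) ∈ relComp A A := by
        rw [← hcompsym]; exact hxz
      rw [hd1 x z ⟨relComp A A, hcompmem, hxz⟩, WithTop.coe_le_coe]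
      intro p hp
      rcases hp with hp | hp
      · exact hcompdiag hp
      · rcases hp with hp | hp
        · exact hp ▸ hxz
        · simp only [Set.mem_singleton_iff] at hp
          exact hp ▸ hzx
    · ext ⟨x, y⟩
      simp only [Set.mem_setOf_eq]
      exact (hkey x y).symm
end

section
/- Let $\mathcal{E}$ be a coarse structure on $X$ defined by the saturated coarse metric $\mathbf{d}^\mathcal{E}$ taking values in $\mathcal{I}^\mathcal{E}_\infty$. If $\mathcal{I}$ is another upward directed poset with zero and $\mathbf{d}$ is a saturated coarse $\mathcal{I}$-metric on $X$ whose induced coarse structure equals $\mathcal{E}$, then the map $\alpha\mapsto\mathbf{D}_\alpha$ is an order isomorphism from $\mathcal{I}$ onto $\mathcal{I}^\mathcal{E}$, and under this isomorphism $\mathbf{d}$ corresponds to $\mathbf{d}^\mathcal{E}$, i.e., $\mathbf{d}^\mathcal{E}(x,y) = \mathbf{D}_{\mathbf{d}(x,y)}$ whenever $\mathbf{d}(x,y)\in\mathcal{I}$. -/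
open Set

/-- if `d` is a saturated coarse `I`-metric inducing `ℰ`, then
`α ↦ D_α` is an order isomorphism of `I` onto `Iᵉ`, and under this isomorphism
`d` corresponds to `dᵉ`, i.e. `dᵉ(x,y) = D_{d(x,y)}` whenever `d(x,y) ∈ I`. -/
theorem stmt7 {X I : Type*} [PartialOrder I] [OrderBot I]
    (hdir : ∀ a b : I, ∃ c : I, a ≤ c ∧ b ≤ c)
    (d : X → X → WithTop I) (hd : IsCoarseMetric d)
    (sat1 : ∀ α β : I, DD d α ⊆ DD d β → α ≤ β)
    (sat2 : ∀ (S : Set (X × X)) (α : I), S ⊆ DD d α → relInv S = S → relDiag X ⊆ S →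
      ∃ γ : I, S = DD d γ)
    (dE : X → X → WithTop (Set (X × X)))
    (hd1 : ∀ x y : X, (∃ A ∈ coarseOf d, (x, y) ∈ A) →
      dE x y = ((relDiag X ∪ {(x, y), (y, x)} : Set (X × X)) : WithTop (Set (X × X))))
    (hd2 : ∀ x y : X, (¬ ∃ A ∈ coarseOf d, (x, y) ∈ A) → dE x y = ⊤) :
    (∀ α β : I, DD d α ⊆ DD d β ↔ α ≤ β) ∧
    (Set.range (DD d) = {A | A ∈ coarseOf d ∧ relInv A = A ∧ relDiag X ⊆ A}) ∧
    (∀ (x y : X) (a : I), d x y = (a : WithTop I) →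
      dE x y = ((DD d a : Set (X × X)) : WithTop (Set (X × X)))) := by

  obtain ⟨hzero, hsymm, -⟩ := hd
  have hmono : ∀ α β : I, α ≤ β → DD d α ⊆ DD d β := by
    intro α β hab p hp
    simp only [DD, Set.mem_setOf_eq] at hp ⊢
    exact le_trans hp (by exact_mod_cast hab)
  have hdiagsub : ∀ α : I, relDiag X ⊆ DD d α := by
    intro α p hp
    have : d p.1 p.2 = ((⊥ : I) : WithTop I) := by
      rw [show p.2 = p.1 from hp.symm, hzero]
    simp only [DD, Set.mem_setOf_eq, this]
    exact_mod_cast bot_le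
  have hinvDD : ∀ α : I, relInv (DD d α) = DD d α := by
    intro α
    ext p
    simp only [relInv, DD, Set.mem_setOf_eq, hsymm p.1 p.2]
  refine ⟨fun α β => ⟨sat1 α β, hmono α β⟩, ?_, ?_⟩
  · ext A
    constructor
    · rintro ⟨α, rfl⟩
      exact ⟨⟨α, subset_rfl⟩, hinvDD α, hdiagsub α⟩
    · rintro ⟨⟨α, hsub⟩, hinv, hdg⟩
      obtain ⟨γ, hγ⟩ := sat2 A α hsub hinv hdg
      exact ⟨γ, hγ.symm⟩
  · intro x y a ha
    have hxy : (x, y) ∈ DD d a := by simp [DD, ha]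
    set S : Set (X × X) := relDiag X ∪ {(x, y), (y, x)} with hS
    have hSsub : S ⊆ DD d a := by
      rintro p (hp | hp)
      · exact hdiagsub a hp
      · rcases hp with hp | hp
        · rw [hp]; exact hxy
        · simp only [Set.mem_singleton_iff] at hp
          rw [hp]
          show d y x ≤ (a : WithTop I)
          rw [hsymm y x, ha]
    have hSinv : relInv S = S := by
      ext p
      rcases p with ⟨u, v⟩
      simp only [relInv, hS, Set.mem_setOf_eq, Set.mem_union, relDiag,
        Set.mem_insert_iff, Set.mem_singleton_iff, Prod.mk.injEq]
      constructor
      · rintro (h | ⟨h1, h2⟩ | ⟨h1, h2⟩)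
        · exact Or.inl h.symm
        · exact Or.inr (Or.inr ⟨h2, h1⟩)
        · exact Or.inr (Or.inl ⟨h2, h1⟩)
      · rintro (h | ⟨h1, h2⟩ | ⟨h1, h2⟩)
        · exact Or.inl h.symm
        · exact Or.inr (Or.inr ⟨h2, h1⟩)
        · exact Or.inr (Or.inl ⟨h2, h1⟩)
    have hSdg : relDiag X ⊆ S := Set.subset_union_left
    obtain ⟨γ, hγ⟩ := sat2 S a hSsub hSinv hSdg
    have hle : γ ≤ a := sat1 γ a (hγ ▸ hSsub)
    have hge : a ≤ γ := by
      have : (x, y) ∈ DD d γ := hγ ▸ (Or.inr (Or.inl rfl))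
      simp only [DD, Set.mem_setOf_eq, ha] at this
      exact_mod_cast this
    have hSeq : S = DD d a := by rw [hγ, le_antisymm hle hge]
    have := hd1 x y ⟨DD d a, ⟨a, subset_rfl⟩, hxy⟩
    rw [this, ← hSeq]
end

section
/- Let $(X,\mathcal{E})$ and $(Y,\mathcal{F})$ be coarse spaces induced by coarse metrics $\mathbf{d}_X$ (values in $\mathcal{I}_\infty$) and $\mathbf{d}_Y$ (values in $\mathcal{J}_\infty$, with $\mathcal{J}$ meet-complete), and let $f:X\to Y$. Then $f$ is bornologous (i.e., $(f\times f)(E)\in\mathcal{F}$ for every $E\in\mathcal{E}$) if and only if there is an increasing map $\Gamma:\mathcal{I}\to\mathcal{J}$ with $\mathbf{d}_Y(f(x),f(y))\leq\Gamma_\infty(\mathbf{d}_X(x,y))$ for all $x,y\in X$. -/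
open Set

section

variable {X Y I J : Type*} [Preorder I] [Preorder J]

theorem DD_mono (d : X → X → WithTop I) {α β : I} (h : α ≤ β) : DD d α ⊆ DD d β :=
  fun _ hp => hp.trans (WithTop.coe_le_coe.mpr h)

theorem WithTop.map_le_coe_of_le {Γ : I → J} (hΓ : Monotone Γ) {a : WithTop I} {α : I}
    (h : a ≤ α) : a.map Γ ≤ Γ α := by
  induction a with
  | top => exact absurd h (by simp)
  | coe a => exact WithTop.coe_le_coe.mpr (hΓ (WithTop.coe_le_coe.mp h))

theorem WithTop.le_coe_of_isGLB {S : Set J} {m : J} (hS : S.Nonempty) (hm : IsGLB S m)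
    {a : WithTop J} (h : ∀ β ∈ S, a ≤ β) : a ≤ m := by
  induction a with
  | top =>
    obtain ⟨β, hβ⟩ := hS
    exact absurd (h β hβ) (by simp)
  | coe c => exact WithTop.coe_le_coe.mpr (hm.2 fun β hβ => WithTop.coe_le_coe.mp (h β hβ))

variable {dX : X → X → WithTop I} {dY : Y → Y → WithTop J} {f : X → Y}

theorem image_DD_subset_DD_of_le_map {Γ : I → J} (hΓ : Monotone Γ)
    (h : ∀ x y, dY (f x) (f y) ≤ WithTop.map Γ (dX x y)) (α : I) :
    (fun p : X × X => (f p.1, f p.2)) '' DD dX α ⊆ DD dY (Γ α) := by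
  rintro _ ⟨⟨x, y⟩, hxy, rfl⟩
  exact (h x y).trans (WithTop.map_le_coe_of_le hΓ hxy)

/-- The control function is `α ↦ inf {β | (f × f)(D_α) ⊆ D_β}`; bornology makes each of these
sets nonempty, and they shrink as `α` grows. -/
theorem exists_monotone_le_map_of_image_DD_mem
    (hmcJ : ∀ S : Set J, S.Nonempty → ∃ m : J, IsGLB S m)
    (hb : ∀ α : I, (fun p : X × X => (f p.1, f p.2)) '' DD dX α ∈ coarseOf dY) :
    ∃ Γ : I → J, Monotone Γ ∧ ∀ x y, dY (f x) (f y) ≤ WithTop.map Γ (dX x y) := by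
  choose Γ hΓ using fun α => hmcJ _ (hb α)
  have hmono : Monotone Γ := fun a b hab =>
    (hΓ b).mono (hΓ a) fun _ hβ => (image_mono (DD_mono dX hab)).trans hβ
  refine ⟨Γ, hmono, fun x y => ?_⟩
  cases hxy : dX x y with
  | top => exact le_top
  | coe α =>
    exact WithTop.le_coe_of_isGLB (hb α) (hΓ α) fun β hβ => hβ ⟨(x, y), hxy.le, rfl⟩

end

theorem stmt11_general {X Y I J : Type*} [PartialOrder I] [PartialOrder J]
    (hmcJ : ∀ S : Set J, S.Nonempty → ∃ m : J, IsGLB S m)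
    (dX : X → X → WithTop I)
    (dY : Y → Y → WithTop J)
    (f : X → Y) :
    (∀ E ∈ coarseOf dX, (fun p : X × X => (f p.1, f p.2)) '' E ∈ coarseOf dY) ↔
      ∃ Γ : I → J, Monotone Γ ∧
        ∀ x y : X, dY (f x) (f y) ≤ WithTop.map Γ (dX x y) := by
  constructor
  · exact fun hb => exists_monotone_le_map_of_image_DD_mem hmcJ fun α => hb _ ⟨α, subset_rfl⟩
  · rintro ⟨Γ, hΓ, h⟩ E ⟨α, hE⟩
    exact ⟨Γ α, (image_mono hE).trans (image_DD_subset_DD_of_le_map hΓ h α)⟩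

/-- `f` is bornologous iff `d_Y ∘ (f × f) ⪯ d_X`
(with `J` meet-complete). -/
theorem stmt11 {X Y I J : Type*} [PartialOrder I] [OrderBot I] [PartialOrder J] [OrderBot J]
    (hdirI : ∀ a b : I, ∃ c : I, a ≤ c ∧ b ≤ c)
    (hdirJ : ∀ a b : J, ∃ c : J, a ≤ c ∧ b ≤ c)
    (hmcJ : ∀ S : Set J, S.Nonempty → ∃ m : J, IsGLB S m)
    (dX : X → X → WithTop I) (hdX : IsCoarseMetric dX)
    (dY : Y → Y → WithTop J) (hdY : IsCoarseMetric dY)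
    (f : X → Y) :
    (∀ E ∈ coarseOf dX, (fun p : X × X => (f p.1, f p.2)) '' E ∈ coarseOf dY) ↔
      ∃ Γ : I → J, Monotone Γ ∧
        ∀ x y : X, dY (f x) (f y) ≤ WithTop.map Γ (dX x y) :=
  stmt11_general hmcJ dX dY f
end

section
/- Let $(X,\mathcal{E})$ and $(Y,\mathcal{F})$ be coarse spaces induced by coarse metrics $\mathbf{d}_X$ (values in $\mathcal{I}_\infty$, with $\mathcal{I}$ meet-complete) and $\mathbf{d}_Y$ (values in $\mathcal{J}_\infty$), and let $f:X\to Y$. Then $f$ is effectively proper (i.e., $(f\times f)^{-1}(F)\in\mathcal{E}$ for every $F\in\mathcal{F}$) if and only if there is an increasing map $\Gamma:\mathcal{J}\to\mathcal{I}$ such that $\mathbf{d}_X(x,y)\leq\Gamma_\infty(\mathbf{d}_Y(f(x),f(y)))$ for all $x,y\in X$. -/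
open Set

/-- `f` is effectively proper iff `d_X ⪯ d_Y ∘ (f × f)`
(with `I` meet-complete). -/
theorem stmt12 {X Y I J : Type*} [PartialOrder I] [OrderBot I] [PartialOrder J] [OrderBot J]
    (hdirI : ∀ a b : I, ∃ c : I, a ≤ c ∧ b ≤ c)
    (hdirJ : ∀ a b : J, ∃ c : J, a ≤ c ∧ b ≤ c)
    (hmcI : ∀ S : Set I, S.Nonempty → ∃ m : I, IsGLB S m)
    (dX : X → X → WithTop I) (hdX : IsCoarseMetric dX)
    (dY : Y → Y → WithTop J) (hdY : IsCoarseMetric dY)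
    (f : X → Y) :
    (∀ F ∈ coarseOf dY, (fun p : X × X => (f p.1, f p.2)) ⁻¹' F ∈ coarseOf dX) ↔
      ∃ Γ : J → I, Monotone Γ ∧
        ∀ x y : X, dX x y ≤ WithTop.map Γ (dY (f x) (f y)) := by
  constructor
  · intro h
    set S : J → Set I := fun β =>
      {α | ∀ x y : X, dY (f x) (f y) ≤ (β : WithTop J) → dX x y ≤ (α : WithTop I)} with hS
    have hne : ∀ β, (S β).Nonempty := by
      intro β
      obtain ⟨α, hα⟩ := h (DD dY β) ⟨β, subset_rfl⟩
      exact ⟨α, fun x y hxy => hα (show ((x, y) : X × X) ∈ _ from hxy)⟩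
    choose Γ hΓ using fun β => hmcI (S β) (hne β)
    have hmem : ∀ β, Γ β ∈ S β := by
      intro β x y hxy
      obtain ⟨α0, hα0⟩ := hne β
      have h0 : dX x y ≤ (α0 : WithTop I) := hα0 x y hxy
      cases hd : dX x y with
      | top => rw [hd] at h0; exact absurd h0 (by simp)
      | coe a =>
        have hlb : a ∈ lowerBounds (S β) := by
          intro α hα
          have h2 := hα x y hxy
          rw [hd] at h2
          exact_mod_cast h2
        exact_mod_cast (hΓ β).2 hlb
    refine ⟨Γ, ?_, ?_⟩
    · intro β β' hββ'
      have hsub : S β' ⊆ S β := fun α hα x y hxy =>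
        hα x y (hxy.trans (by exact_mod_cast hββ'))
      exact (hΓ β').2 fun α hα => (hΓ β).1 (hsub hα)
    · intro x y
      cases hd : dY (f x) (f y) with
      | top => simp [hd]
      | coe b =>
        have h2 := hmem b x y (le_of_eq hd)
        simpa [hd] using h2
  · rintro ⟨Γ, hmono, hΓ⟩ F ⟨β, hF⟩
    refine ⟨Γ β, fun p hp => ?_⟩
    have h1 : dY (f p.1) (f p.2) ≤ (β : WithTop J) := hF hp
    show dX p.1 p.2 ≤ ((Γ β : I) : WithTop I)
    cases hd : dY (f p.1) (f p.2) with
    | top => rw [hd] at h1; exact absurd h1 (by simp)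
    | coe b =>
      have hb : b ≤ β := by rw [hd] at h1; exact_mod_cast h1
      have h2 := hΓ p.1 p.2
      rw [hd] at h2
      calc dX p.1 p.2 ≤ (Γ b : WithTop I) := h2
        _ ≤ (Γ β : WithTop I) := by exact_mod_cast hmono hb
end

section
/- Let $\mathcal{I}$ be a meet-complete totally ordered set with smallest element and $\mathbf{d}$ a coarse $\mathcal{I}$-metric on $X$. Define the Hausdorff semi-metric on $\mathcal{P}_0(X)$ by $\check{\mathbf{d}}(R,S) := \inf\{\alpha\in\mathcal{I} : R\subseteq\bigcup_{s\in S}\mathbf{D}(s,\alpha) \text{ and } S\subseteq\bigcup_{r\in R}\mathbf{D}(r,\alpha)\}$ (with $\inf\emptyset=\infty$), where $\mathbf{D}(z,\alpha)=\{y : \mathbf{d}(z,y)\leq\alpha\}$. Then $\check{\mathbf{d}}$ is a coarse $\mathcal{I}$-metric on $\mathcal{P}_0(X)$. -/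
open Set

/-- The set of `α ∈ I` with `R ⊆ ⋃_{s ∈ S} D(s,α)` and `S ⊆ ⋃_{r ∈ R} D(r,α)`. -/
def HCond {X I : Type*} [Preorder I] (d : X → X → WithTop I) (R S : Set X) : Set I :=
  {α : I | (R ⊆ ⋃ s ∈ S, {y | d s y ≤ (α : WithTop I)}) ∧
           (S ⊆ ⋃ r ∈ R, {y | d r y ≤ (α : WithTop I)})}

/-- for a meet-complete totally ordered `I` and a coarse `I`-metric
`d` on `X`, the Hausdorff semi-metric `ď(R,S) = inf (HCond d R S)` (with
`inf ∅ = ∞`) is a coarse `I`-metric on `𝒫₀(X)`. -/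
theorem stmt13 {X I : Type*} [LinearOrder I] [OrderBot I]
    (hmc : ∀ S : Set I, S.Nonempty → ∃ m : I, IsGLB S m)
    (d : X → X → WithTop I) (hd : IsCoarseMetric d)
    (dH : {S : Set X // S.Nonempty} → {S : Set X // S.Nonempty} → WithTop I)
    (hdH : ∀ R S : {S : Set X // S.Nonempty},
      ((HCond d R.1 S.1).Nonempty →
        ∃ a : I, dH R S = (a : WithTop I) ∧ IsGLB (HCond d R.1 S.1) a) ∧
      (¬ (HCond d R.1 S.1).Nonempty → dH R S = ⊤)) :
    (∀ R, dH R R = ((⊥ : I) : WithTop I)) ∧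
    (∀ R S, dH R S = dH S R) ∧
    (∃ Φ : I → I, ∀ (α : I) (R S T : {S : Set X // S.Nonempty}),
      dH R S ≤ (α : WithTop I) → dH S T ≤ (α : WithTop I) →
      dH R T ≤ ((Φ α : I) : WithTop I)) := by
  classical
  obtain ⟨h0, hsym, Φ₀, hΦ₀⟩ := hd
  -- HCond is upward closed
  have hup : ∀ (R S : Set X) (a b : I), a ∈ HCond d R S → a ≤ b → b ∈ HCond d R S := by
    rintro R S a b ⟨h1, h2⟩ hab
    have hab' : (a : WithTop I) ≤ (b : WithTop I) := WithTop.coe_le_coe.2 hab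
    constructor
    · intro x hx
      obtain ⟨s, hs, hxs⟩ := by
        simpa only [Set.mem_iUnion, Set.mem_setOf_eq, exists_prop] using h1 hx
      simp only [Set.mem_iUnion, Set.mem_setOf_eq, exists_prop]
      exact ⟨s, hs, le_trans hxs hab'⟩
    · intro x hx
      obtain ⟨s, hs, hxs⟩ := by
        simpa only [Set.mem_iUnion, Set.mem_setOf_eq, exists_prop] using h2 hx
      simp only [Set.mem_iUnion, Set.mem_setOf_eq, exists_prop]
      exact ⟨s, hs, le_trans hxs hab'⟩
  -- composition
  have hcomp : ∀ (β : I) (R S T : Set X), β ∈ HCond d R S → β ∈ HCond d S T →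
      Φ₀ β ∈ HCond d R T := by
    rintro β R S T ⟨h1, h2⟩ ⟨h3, h4⟩
    constructor
    · intro r hr
      obtain ⟨s, hs, hsr⟩ := by
        simpa only [Set.mem_iUnion, Set.mem_setOf_eq, exists_prop] using h1 hr
      obtain ⟨t, ht, hts⟩ := by
        simpa only [Set.mem_iUnion, Set.mem_setOf_eq, exists_prop] using h3 hs
      have : (t, r) ∈ DD d (Φ₀ β) := hΦ₀ β ⟨s, hts, hsr⟩
      simp only [Set.mem_iUnion, Set.mem_setOf_eq, exists_prop]
      exact ⟨t, ht, this⟩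
    · intro t ht
      obtain ⟨s, hs, hst⟩ := by
        simpa only [Set.mem_iUnion, Set.mem_setOf_eq, exists_prop] using h4 ht
      obtain ⟨r, hr, hrs⟩ := by
        simpa only [Set.mem_iUnion, Set.mem_setOf_eq, exists_prop] using h2 hs
      have : (r, t) ∈ DD d (Φ₀ β) := hΦ₀ β ⟨s, hrs, hst⟩
      simp only [Set.mem_iUnion, Set.mem_setOf_eq, exists_prop]
      exact ⟨r, hr, this⟩
  -- from dH R S ≤ α extract membership of relevant radii
  have hmem : ∀ (R S : {S : Set X // S.Nonempty}) (α : I), dH R S ≤ (α : WithTop I) →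
      (HCond d R.1 S.1).Nonempty ∧ ∀ β : I, α < β → β ∈ HCond d R.1 S.1 := by
    intro R S α hle
    have hne : (HCond d R.1 S.1).Nonempty := by
      by_contra hne
      rw [(hdH R S).2 hne] at hle
      simp at hle
    obtain ⟨a, ha, hglb⟩ := (hdH R S).1 hne
    rw [ha] at hle
    have haα : a ≤ α := WithTop.coe_le_coe.1 hle
    refine ⟨hne, fun β hβ => ?_⟩
    have : ¬ β ∈ lowerBounds (HCond d R.1 S.1) := by
      intro hb
      exact absurd (hglb.2 hb) (not_le.2 (lt_of_le_of_lt haα hβ))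
    obtain ⟨γ, hγ, hγβ⟩ := by
      simpa only [lowerBounds, Set.mem_setOf_eq, not_forall, not_le] using this
    exact hup _ _ γ β hγ hγβ.le
  refine ⟨?_, ?_, ?_⟩
  · -- dH R R = ⊥
    intro R
    have hbot : (⊥ : I) ∈ HCond d R.1 R.1 := by
      constructor <;>
      · intro r hr
        simp only [Set.mem_iUnion, Set.mem_setOf_eq, exists_prop]
        exact ⟨r, hr, le_of_eq (h0 r)⟩
    obtain ⟨a, ha, hglb⟩ := (hdH R R).1 ⟨⊥, hbot⟩
    rw [ha]
    have : a = ⊥ := le_bot_iff.1 (hglb.1 hbot)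
    rw [this]
  · -- symmetry
    intro R S
    have hEq : HCond d R.1 S.1 = HCond d S.1 R.1 := by
      ext γ; exact ⟨fun ⟨h1, h2⟩ => ⟨h2, h1⟩, fun ⟨h1, h2⟩ => ⟨h2, h1⟩⟩
    by_cases hne : (HCond d R.1 S.1).Nonempty
    · obtain ⟨a, ha, hglb⟩ := (hdH R S).1 hne
      obtain ⟨b, hb, hglb'⟩ := (hdH S R).1 (hEq ▸ hne)
      rw [ha, hb, hglb.unique (hEq ▸ hglb')]
    · rw [(hdH R S).2 hne, (hdH S R).2 (hEq ▸ hne)]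
  · -- coarse property
    refine ⟨fun α => if h : ∃ β : I, α < β then
        (hmc (Φ₀ '' {β | α < β}) ⟨Φ₀ h.choose, ⟨h.choose, h.choose_spec, rfl⟩⟩).choose
      else Φ₀ α, ?_⟩
    intro α R S T hRS hST
    obtain ⟨hne₁, hβ₁⟩ := hmem R S α hRS
    obtain ⟨hne₂, hβ₂⟩ := hmem S T α hST
    by_cases h : ∃ β : I, α < β
    · have hglbΦ := (hmc (Φ₀ '' {β | α < β})
        ⟨Φ₀ h.choose, ⟨h.choose, h.choose_spec, rfl⟩⟩).choose_spec
      simp only [dif_pos h]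
      have hneRT : (HCond d R.1 T.1).Nonempty :=
        ⟨Φ₀ h.choose, hcomp _ _ _ _ (hβ₁ _ h.choose_spec) (hβ₂ _ h.choose_spec)⟩
      obtain ⟨c, hc, hglbc⟩ := (hdH R T).1 hneRT
      rw [hc]
      refine WithTop.coe_le_coe.2 (hglbΦ.2 ?_)
      rintro x ⟨β, hβ, rfl⟩
      exact hglbc.1 (hcomp _ _ _ _ (hβ₁ _ hβ) (hβ₂ _ hβ))
    · -- α is maximal
      push_neg at h
      obtain ⟨γ₁, hγ₁⟩ := hne₁
      obtain ⟨γ₂, hγ₂⟩ := hne₂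
      have hα₁ : α ∈ HCond d R.1 S.1 := hup _ _ γ₁ α hγ₁ (h γ₁)
      have hα₂ : α ∈ HCond d S.1 T.1 := hup _ _ γ₂ α hγ₂ (h γ₂)
      have hRT := hcomp α _ _ _ hα₁ hα₂
      obtain ⟨c, hc, hglbc⟩ := (hdH R T).1 ⟨Φ₀ α, hRT⟩
      simp only [dif_neg (not_exists.2 fun β hβ => absurd (h β) (not_le.2 hβ))]
      rw [hc]
      exact WithTop.coe_le_coe.2 (hglbc.1 hRT)
end

section
/- Let $\mathcal{I}$ be a meet-complete totally ordered set with smallest element and $\mathbf{d}$ a coarse $\mathcal{I}$-metric on $X$ inducing the coarse structure $\mathcal{E}_\mathbf{d}$. Then the coarse structure on $\mathcal{P}_0(X)$ induced by the Hausdorff coarse metric $\check{\mathbf{d}}$ coincides with the Hausdorff coarse structure $\check{\mathcal{E}}_\mathbf{d}$, i.e., the coarse structure generated by the sets $\check{E} = \{(R,S) : R\subseteq E[S], S\subseteq E[R]\}$ for symmetric $E\in\mathcal{E}_\mathbf{d}$ containing $\Delta_X$. -/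
open Set

set_option linter.unusedSectionVars false

section Aux
variable {X I : Type*} [LinearOrder I] [OrderBot I]

lemma hcond_mono (d : X → X → WithTop I) {R S : Set X} {a b : I} (hab : a ≤ b)
    (h : a ∈ HCond d R S) : b ∈ HCond d R S := by
  obtain ⟨h1, h2⟩ := h
  constructor
  · intro r hr
    obtain ⟨s, hs, hds⟩ := mem_iUnion₂.1 (h1 hr)
    exact mem_iUnion₂.2 ⟨s, hs, le_trans hds (WithTop.coe_le_coe.2 hab)⟩
  · intro s hs
    obtain ⟨r, hr, hdr⟩ := mem_iUnion₂.1 (h2 hs)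
    exact mem_iUnion₂.2 ⟨r, hr, le_trans hdr (WithTop.coe_le_coe.2 hab)⟩

lemma hcond_comp (d : X → X → WithTop I) {Φ : I → I}
    (hΦ : ∀ α, relComp (DD d α) (DD d α) ⊆ DD d (Φ α))
    {R T S : Set X} {γ : I} (h1 : γ ∈ HCond d R T) (h2 : γ ∈ HCond d T S) :
    max γ (Φ γ) ∈ HCond d R S := by
  obtain ⟨hRT1, hRT2⟩ := h1
  obtain ⟨hTS1, hTS2⟩ := h2
  constructor
  · intro r hr
    obtain ⟨t, ht, hdt⟩ := mem_iUnion₂.1 (hRT1 hr)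
    obtain ⟨s, hs, hds⟩ := mem_iUnion₂.1 (hTS1 ht)
    have hsr : ((s, r) : X × X) ∈ DD d (Φ γ) := hΦ γ ⟨t, hds, hdt⟩
    exact mem_iUnion₂.2 ⟨s, hs, show d s r ≤ ((max γ (Φ γ) : I) : WithTop I) from
      le_trans hsr (WithTop.coe_le_coe.2 (le_max_right _ _))⟩
  · intro s hs
    obtain ⟨t, ht, hdt⟩ := mem_iUnion₂.1 (hTS2 hs)
    obtain ⟨r, hr, hdr⟩ := mem_iUnion₂.1 (hRT2 ht)
    have hrs : ((r, s) : X × X) ∈ DD d (Φ γ) := hΦ γ ⟨t, hdr, hdt⟩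
    exact mem_iUnion₂.2 ⟨r, hr, show d r s ≤ ((max γ (Φ γ) : I) : WithTop I) from
      le_trans hrs (WithTop.coe_le_coe.2 (le_max_right _ _))⟩

lemma hcond_gen (d : X → X → WithTop I) (β : I) (R S : Set X) :
    ((R ⊆ {y | ∃ x ∈ S, (x, y) ∈ DD d β}) ∧ (S ⊆ {y | ∃ x ∈ R, (x, y) ∈ DD d β}))
    ↔ β ∈ HCond d R S := by
  simp only [HCond, DD, mem_setOf_eq, subset_def, mem_iUnion, exists_prop]

end Aux

/-- the coarse structure on `𝒫₀(X)` induced by the Hausdorff coarse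
metric `ď` coincides with the Hausdorff coarse structure, i.e. the coarse structure
generated by the sets `Ě` for symmetric `E ∈ ℰ_d` containing the diagonal. -/
theorem stmt14 {X I : Type*} [LinearOrder I] [OrderBot I]
    (hmc : ∀ S : Set I, S.Nonempty → ∃ m : I, IsGLB S m)
    (d : X → X → WithTop I) (hd : IsCoarseMetric d)
    (dH : {S : Set X // S.Nonempty} → {S : Set X // S.Nonempty} → WithTop I)
    (hdH : ∀ R S : {S : Set X // S.Nonempty},
      ((HCond d R.1 S.1).Nonempty →
        ∃ a : I, dH R S = (a : WithTop I) ∧ IsGLB (HCond d R.1 S.1) a) ∧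
      (¬ (HCond d R.1 S.1).Nonempty → dH R S = ⊤)) :
    coarseOf dH =
      {A | ∀ F : Set (Set ({S : Set X // S.Nonempty} × {S : Set X // S.Nonempty})),
        IsCoarseStructure F →
        (∀ E : Set (X × X), E ∈ coarseOf d → relInv E = E → relDiag X ⊆ E →
          {p : {S : Set X // S.Nonempty} × {S : Set X // S.Nonempty} |
            p.1.1 ⊆ {y | ∃ x ∈ p.2.1, (x, y) ∈ E} ∧
            p.2.1 ⊆ {y | ∃ x ∈ p.1.1, (x, y) ∈ E}} ∈ F) →
        A ∈ F} := by
  obtain ⟨hbot, hsymd, Φ, hΦ⟩ := hd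
  -- if τ is in the Hausdorff condition set then dH R S ≤ τ
  have key1 : ∀ (R S : {S : Set X // S.Nonempty}) (τ : I),
      τ ∈ HCond d R.1 S.1 → dH R S ≤ (τ : WithTop I) := by
    intro R S τ hτ
    obtain ⟨a, ha, hglb⟩ := (hdH R S).1 ⟨τ, hτ⟩
    rw [ha]; exact_mod_cast hglb.1 hτ
  -- from dH R S ≤ α extract the glb
  have key2 : ∀ (R S : {S : Set X // S.Nonempty}) (α : I), dH R S ≤ (α : WithTop I) →
      ∃ a : I, a ≤ α ∧ IsGLB (HCond d R.1 S.1) a ∧ (HCond d R.1 S.1).Nonempty := by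
    intro R S α h
    by_cases hne : (HCond d R.1 S.1).Nonempty
    · obtain ⟨a, ha, hglb⟩ := (hdH R S).1 hne
      refine ⟨a, ?_, hglb, hne⟩
      rw [ha] at h; exact_mod_cast h
    · rw [(hdH R S).2 hne] at h
      exact absurd h (by simp)
  -- anything strictly above α is in the condition set
  have key3 : ∀ (R S : {S : Set X // S.Nonempty}) (α β : I),
      dH R S ≤ (α : WithTop I) → α < β → β ∈ HCond d R.1 S.1 := by
    intro R S α β h hβ
    obtain ⟨a, haα, hglb, -⟩ := key2 R S α h
    by_contra hmem
    have hlb : β ∈ lowerBounds (HCond d R.1 S.1) := by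
      intro c hc
      by_contra hbc
      exact hmem (hcond_mono d (le_of_not_ge hbc) hc)
    exact absurd (hglb.2 hlb) (not_le.2 (lt_of_le_of_lt haα hβ))
  -- if α is the top of I, it is in the condition set
  have key4 : ∀ (R S : {S : Set X // S.Nonempty}) (α : I),
      dH R S ≤ (α : WithTop I) → (∀ γ : I, γ ≤ α) → α ∈ HCond d R.1 S.1 := by
    intro R S α h htop
    obtain ⟨a, haα, hglb, c, hc⟩ := key2 R S α h
    exact hcond_mono d (htop c) hc
  -- dH is symmetric
  have hdHsym : ∀ R S : {S : Set X // S.Nonempty}, dH R S = dH S R := by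
    intro R S
    have hset : HCond d R.1 S.1 = HCond d S.1 R.1 := Set.ext fun α => and_comm
    by_cases hne : (HCond d R.1 S.1).Nonempty
    · obtain ⟨a, ha, hglb⟩ := (hdH R S).1 hne
      obtain ⟨b, hb, hglb'⟩ := (hdH S R).1 (hset ▸ hne)
      rw [ha, hb]
      rw [hset] at hglb
      exact congrArg _ (hglb.unique hglb')
    · rw [(hdH R S).2 hne, (hdH S R).2 (by rw [← hset]; exact hne)]
  ext A
  simp only [coarseOf, mem_setOf_eq]
  constructor
  · rintro ⟨α, hA⟩ F ⟨hFdiag, hFsub, hFinv, hFcomp, hFun⟩ hgenF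
    by_cases hex : ∃ β : I, α < β
    · obtain ⟨β, hβ⟩ := hex
      have hEs : relInv (DD d β) = DD d β := by
        ext p; simp only [relInv, DD, mem_setOf_eq]; rw [hsymd]
      have hEd : relDiag X ⊆ DD d β := by
        intro p hp
        show d p.1 p.2 ≤ ((β : I) : WithTop I)
        rw [show p.1 = p.2 from hp, hbot]
        exact WithTop.coe_le_coe.2 bot_le
      refine hFsub _ (hgenF (DD d β) ⟨β, subset_rfl⟩ hEs hEd) A ?_
      intro p hp
      exact (hcond_gen d β p.1.1 p.2.1).2 (key3 p.1 p.2 α β (hA hp) hβ)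
    · push_neg at hex
      have hEs : relInv (DD d α) = DD d α := by
        ext p; simp only [relInv, DD, mem_setOf_eq]; rw [hsymd]
      have hEd : relDiag X ⊆ DD d α := by
        intro p hp
        show d p.1 p.2 ≤ ((α : I) : WithTop I)
        rw [show p.1 = p.2 from hp, hbot]
        exact WithTop.coe_le_coe.2 bot_le
      refine hFsub _ (hgenF (DD d α) ⟨α, subset_rfl⟩ hEs hEd) A ?_
      intro p hp
      exact (hcond_gen d α p.1.1 p.2.1).2 (key4 p.1 p.2 α (hA hp) hex)
  · intro h
    refine h (coarseOf dH) ⟨?_, ?_, ?_, ?_, ?_⟩ ?_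
    · -- diagonal
      refine ⟨⊥, fun p hp => ?_⟩
      show dH p.1 p.2 ≤ ((⊥ : I) : WithTop I)
      rw [show p.1 = p.2 from hp]
      refine key1 p.2 p.2 ⊥ ⟨fun r hr => ?_, fun r hr => ?_⟩ <;>
        exact mem_iUnion₂.2 ⟨r, hr, le_of_eq (hbot r)⟩
    · -- subsets
      rintro B ⟨α, hB⟩ C hCB
      exact ⟨α, hCB.trans hB⟩
    · -- inverses
      rintro B ⟨α, hB⟩
      refine ⟨α, fun p hp => ?_⟩
      show dH p.1 p.2 ≤ (α : WithTop I)
      rw [hdHsym]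
      exact hB hp
    · -- compositions
      rintro B ⟨α, hB⟩ C ⟨β, hC⟩
      by_cases hex : ∃ γ : I, max α β < γ
      · obtain ⟨γ, hγ⟩ := hex
        refine ⟨max γ (Φ γ), ?_⟩
        rintro p ⟨T, hpT, hTp⟩
        have h1 : γ ∈ HCond d p.1.1 T.1 :=
          key3 _ _ α γ (hB hpT) (lt_of_le_of_lt (le_max_left _ _) hγ)
        have h2 : γ ∈ HCond d T.1 p.2.1 :=
          key3 _ _ β γ (hC hTp) (lt_of_le_of_lt (le_max_right _ _) hγ)
        exact key1 _ _ _ (hcond_comp d hΦ h1 h2)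
      · push_neg at hex
        refine ⟨max (max α β) (Φ (max α β)), ?_⟩
        rintro p ⟨T, hpT, hTp⟩
        have h1 : max α β ∈ HCond d p.1.1 T.1 :=
          key4 _ _ _ (le_trans (hB hpT) (WithTop.coe_le_coe.2 (le_max_left _ _))) hex
        have h2 : max α β ∈ HCond d T.1 p.2.1 :=
          key4 _ _ _ (le_trans (hC hTp) (WithTop.coe_le_coe.2 (le_max_right _ _))) hex
        exact key1 _ _ _ (hcond_comp d hΦ h1 h2)
    · -- unions
      rintro B ⟨α, hB⟩ C ⟨β, hC⟩
      refine ⟨max α β, ?_⟩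
      rintro p (hp | hp) <;> show dH p.1 p.2 ≤ ((max α β : I) : WithTop I)
      · exact le_trans (hB hp) (WithTop.coe_le_coe.2 (le_max_left _ _))
      · exact le_trans (hC hp) (WithTop.coe_le_coe.2 (le_max_right _ _))
    · -- generators belong to coarseOf dH
      rintro E ⟨β, hEβ⟩ - -
      refine ⟨β, ?_⟩
      rintro p ⟨h1, h2⟩
      refine key1 p.1 p.2 β ((hcond_gen d β p.1.1 p.2.1).1 ⟨?_, ?_⟩)
      · intro y hy
        obtain ⟨x, hx, hxy⟩ := h1 hy
        exact ⟨x, hx, hEβ hxy⟩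
      · intro y hy
        obtain ⟨x, hx, hxy⟩ := h2 hy
        exact ⟨x, hx, hEβ hxy⟩
end

section
/- A coarse structure $\mathcal{E}$ on a set $X$ has a totally ordered base if and only if there exist a meet-complete totally ordered set $\mathcal{I}$ with smallest element and a coarse $\mathcal{I}$-metric $\mathbf{d}$ on $X$ such that $\mathcal{E}$ equals the coarse structure induced by $\mathbf{d}$. -/
open Set

universe u

lemma symPart_symm {X : Type u} {B : Set (Set (X × X))} {C : Set (X × X)}
    (hC : C ∈ symPart B) {x y : X} (h : (x, y) ∈ C) : (y, x) ∈ C := by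
  obtain ⟨A, -, rfl⟩ := hC
  rcases h with ⟨h1, h2⟩ | h
  · exact Or.inl ⟨h2, h1⟩
  · exact Or.inr h.symm

lemma interClos_symm {X : Type u} {B : Set (Set (X × X))} {C : Set (X × X)}
    (hC : C ∈ interClos B) {x y : X} (h : (x, y) ∈ C) : (y, x) ∈ C := by
  obtain ⟨S, -, hS, rfl⟩ := hC
  exact fun D hD => symPart_symm (hS hD) (h D hD)

lemma mem_interClos_of_symPart {X : Type u} {B : Set (Set (X × X))} {C : Set (X × X)}
    (hC : C ∈ symPart B) : C ∈ interClos B :=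
  ⟨{C}, ⟨C, rfl⟩, by simpa using hC, (sInter_singleton C).symm⟩

/-- The family of symmetrized basic entourages containing `(x,y)`. -/
def dSet {X : Type u} (B : Set (Set (X × X))) (x y : X) : Set (Set (X × X)) :=
  {C | C ∈ symPart B ∧ (x, y) ∈ C}

open Classical in
noncomputable def dAux2 {X : Type u} (B : Set (Set (X × X)))
    (S : Set (Set (X × X))) : Option {C : Set (X × X) // C ∈ interClos B} :=
  if h : S.Nonempty ∧ S ⊆ symPart B then
    some ⟨⋂₀ S, ⟨S, h.1, h.2, rfl⟩⟩
  else none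

noncomputable def dAux {X : Type u} (B : Set (Set (X × X))) (x y : X) :
    Option {C : Set (X × X) // C ∈ interClos B} :=
  dAux2 B (dSet B x y)

lemma dAux_le {X : Type u} (B : Set (Set (X × X))) (x y : X) {α : Set (X × X)}
    (hα : α ∈ interClos B) :
    (∃ a : {C : Set (X × X) // C ∈ interClos B}, dAux B x y = some a ∧ a.1 ⊆ α) ↔
      (x, y) ∈ α := by
  obtain ⟨S, hSne, hSsub, rfl⟩ := hα
  unfold dAux dAux2
  split_ifs with h
  · constructor
    · rintro ⟨a, ha, hsub⟩
      apply hsub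
      rw [Option.some_inj] at ha
      rw [← ha]
      exact fun C hC => hC.2
    · intro hxy
      refine ⟨_, rfl, ?_⟩
      intro p hp C hC
      exact hp C ⟨hSsub hC, hxy C hC⟩
  · constructor
    · rintro ⟨a, ha, -⟩; exact absurd ha (by simp)
    · intro hxy
      obtain ⟨C, hC⟩ := hSne
      exact absurd ⟨⟨C, hSsub hC, hxy C hC⟩, fun _ hC => hC.1⟩ h

lemma dAux_congr {X : Type u} {B : Set (Set (X × X))} {x y x' y' : X}
    (h : dSet B x y = dSet B x' y') : dAux B x y = dAux B x' y' := by
  unfold dAux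
  rw [h]

/-- a coarse structure `ℰ` has a totally ordered base iff it is
induced by a coarse `I`-metric with `I` a meet-complete totally ordered set with
smallest element. -/
theorem stmt15 {X : Type u} (E : Set (Set (X × X))) (hE : IsCoarseStructure E) :
    (∃ B : Set (Set (X × X)), B ⊆ E ∧ (∀ A ∈ E, ∃ C ∈ B, A ⊆ C) ∧
      ∀ A ∈ B, ∀ C ∈ B, A ⊆ C ∨ C ⊆ A) ↔
    ∃ (I : Type u) (le : I → I → Prop) (z : I) (d : X → X → Option I),
      (∀ a, le a a) ∧
      (∀ a b, le a b → le b a → a = b) ∧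
      (∀ a b c, le a b → le b c → le a c) ∧
      (∀ a b, le a b ∨ le b a) ∧
      (∀ a, le z a) ∧
      (∀ S : Set I, S.Nonempty → ∃ m : I,
        (∀ a ∈ S, le m a) ∧ ∀ b : I, (∀ a ∈ S, le b a) → le b m) ∧
      (∀ x, d x x = some z) ∧
      (∀ x y, d x y = d y x) ∧
      (∃ Φ : I → I, ∀ α : I, ∀ x y w : X,
        (∃ a, d x y = some a ∧ le a α) → (∃ a, d y w = some a ∧ le a α) →
        ∃ a, d x w = some a ∧ le a (Φ α)) ∧
      E = {A | ∃ α : I, A ⊆ {p : X × X | ∃ a, d p.1 p.2 = some a ∧ le a α}} := by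
  obtain ⟨hdiag, hsub, hinv, hcomp, hunion⟩ := hE
  constructor
  · rintro ⟨B, hBE, hBase, hChain⟩
    -- symmetrized basic sets are in E
    have hsymE : ∀ C ∈ symPart B, C ∈ E := by
      rintro C ⟨A, hA, rfl⟩
      exact hunion _ (hsub _ (hBE hA) _ inter_subset_left) _ hdiag
    have hicE : ∀ C ∈ interClos B, C ∈ E := by
      rintro C ⟨S, ⟨D, hD⟩, hSsub, rfl⟩
      exact hsub _ (hsymE _ (hSsub hD)) _ (sInter_subset_of_mem hD)
    have hsymNe : (symPart B).Nonempty := by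
      obtain ⟨C, hC, -⟩ := hBase _ hdiag
      exact ⟨_, mem_image_of_mem _ hC⟩
    -- symPart B is a chain
    have hChainS : ∀ C ∈ symPart B, ∀ D ∈ symPart B, C ⊆ D ∨ D ⊆ C := by
      rintro _ ⟨A, hA, rfl⟩ _ ⟨A', hA', rfl⟩
      rcases hChain A hA A' hA' with h | h
      · exact Or.inl (union_subset_union_left _ (inter_subset_inter h
          (fun p hp => h hp)))
      · exact Or.inr (union_subset_union_left _ (inter_subset_inter h
          (fun p hp => h hp)))
    have hChainI : ∀ C ∈ interClos B, ∀ D ∈ interClos B, C ⊆ D ∨ D ⊆ C := by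
      rintro _ ⟨S, hSne, hSsub, rfl⟩ _ ⟨S', hS'ne, hS'sub, rfl⟩
      by_cases h : ⋂₀ S ⊆ ⋂₀ S'
      · exact Or.inl h
      · right
        rw [not_subset] at h
        obtain ⟨p, hp, hp'⟩ := h
        rw [mem_sInter] at hp'
        push_neg at hp'
        obtain ⟨C, hCS', hpC⟩ := hp'
        intro q hq
        intro D hD
        rcases hChainS C (hS'sub hCS') D (hSsub hD) with h | h
        · exact h (hq C hCS')
        · exact absurd (h (hp D hD)) hpC
    -- every element of E is contained in an element of interClos B
    have hBase' : ∀ A ∈ E, ∃ C ∈ interClos B, A ⊆ C := by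
      intro A hA
      obtain ⟨C, hC, hsubC⟩ := hBase _ (hunion _ hA _ (hinv _ hA))
      refine ⟨(C ∩ relInv C) ∪ relDiag X,
        mem_interClos_of_symPart (mem_image_of_mem _ hC), ?_⟩
      intro p hp
      exact Or.inl ⟨hsubC (Or.inl hp), hsubC (Or.inr hp)⟩
    refine ⟨{C : Set (X × X) // C ∈ interClos B}, fun a b => a.1 ⊆ b.1,
      ⟨⋂₀ symPart B, ⟨symPart B, hsymNe, subset_rfl, rfl⟩⟩, dAux B,
      fun a => subset_rfl, fun a b h1 h2 => Subtype.ext (subset_antisymm h1 h2),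
      fun a b c h1 h2 => h1.trans h2, fun a b => hChainI a.1 a.2 b.1 b.2,
      ?_, ?_, ?_, ?_, ?_, ?_⟩
    · -- smallest element
      rintro ⟨a, S, hSne, hSsub, rfl⟩
      exact sInter_subset_sInter hSsub
    · -- meets
      intro S hS
      set T : Set (Set (X × X)) := {D | D ∈ symPart B ∧ ∃ a ∈ S, a.1 ⊆ D} with hT
      have hTne : T.Nonempty := by
        obtain ⟨a, ha⟩ := hS
        obtain ⟨Sa, ⟨D, hD⟩, hasub, haeq⟩ := a.2
        exact ⟨D, hasub hD, a, ha, haeq ▸ sInter_subset_of_mem hD⟩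
      refine ⟨⟨⋂₀ T, T, hTne, fun D hD => hD.1, rfl⟩, ?_, ?_⟩
      · intro a ha
        obtain ⟨Sa, hane, hasub, haeq⟩ := a.2
        show ⋂₀ T ⊆ a.1
        rw [haeq]
        intro p hp D hD
        exact hp D ⟨hasub hD, a, ha, haeq ▸ sInter_subset_of_mem hD⟩
      · rintro b hb p hp D ⟨hD1, a, ha, hsubD⟩
        exact hsubD (hb a ha hp)
    · -- d x x = z
      intro x
      have hall : dSet B x x = symPart B := by
        ext C
        refine ⟨fun h => h.1, fun h => ⟨h, ?_⟩⟩
        obtain ⟨A, -, rfl⟩ := h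
        exact Or.inr rfl
      unfold dAux dAux2
      rw [dif_pos ⟨hall ▸ hsymNe, fun _ hC => hC.1⟩]
      exact congrArg some (Subtype.ext (congrArg Set.sInter hall))
    · -- symmetry
      intro x y
      apply dAux_congr
      ext C
      exact and_congr_right fun h => ⟨fun hh => symPart_symm h hh,
        fun hh => symPart_symm h hh⟩
    · -- growth function
      choose C hCB hCsub using fun α : {C : Set (X × X) // C ∈ interClos B} =>
        hBase _ (hcomp _ (hicE _ α.2) _ (hicE _ α.2))
      refine ⟨fun α => ⟨(C α ∩ relInv (C α)) ∪ relDiag X,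
        mem_interClos_of_symPart (mem_image_of_mem _ (hCB α))⟩, ?_⟩
      intro α x y w h1 h2
      have h1' : (x, y) ∈ α.1 := (dAux_le B x y α.2).mp h1
      have h2' : (y, w) ∈ α.1 := (dAux_le B y w α.2).mp h2
      apply (dAux_le B x w (mem_interClos_of_symPart
        (mem_image_of_mem _ (hCB α)))).mpr
      exact Or.inl ⟨hCsub α ⟨y, h1', h2'⟩,
        hCsub α ⟨y, interClos_symm α.2 h2', interClos_symm α.2 h1'⟩⟩
    · -- E is the induced coarse structure
      ext A
      simp only [mem_setOf_eq]
      constructor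
      · intro hA
        obtain ⟨C, hC, hsubC⟩ := hBase' A hA
        refine ⟨⟨C, hC⟩, fun p hp => ?_⟩
        exact (dAux_le B p.1 p.2 hC).mpr (hsubC hp)
      · rintro ⟨α, hA⟩
        exact hsub _ (hicE _ α.2) _
          (fun p hp => (dAux_le B p.1 p.2 α.2).mp (hA hp))
  · rintro ⟨I, le, z, d, hrefl, hanti, htrans, htotal, hz, hmeet, hdxx, hdsymm,
      hPhi, rfl⟩
    refine ⟨{A | ∃ α : I, A = {p : X × X | ∃ a, d p.1 p.2 = some a ∧ le a α}},
      ?_, ?_, ?_⟩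
    · rintro A ⟨α, rfl⟩
      exact ⟨α, subset_rfl⟩
    · rintro A ⟨α, hsubA⟩
      exact ⟨_, ⟨α, rfl⟩, hsubA⟩
    · rintro A ⟨α, rfl⟩ D ⟨β, rfl⟩
      rcases htotal α β with h | h
      · exact Or.inl fun p ⟨a, ha, hle⟩ => ⟨a, ha, htrans _ _ _ hle h⟩
      · exact Or.inr fun p ⟨a, ha, hle⟩ => ⟨a, ha, htrans _ _ _ hle h⟩
end

section
/- Let $\mathcal{U}$ be a non-trivial uniform structure on $X$ (i.e., $0_\mathcal{U} := \bigcap\mathcal{U}\notin\mathcal{U}$) and $\mathcal{A}$ a base for $\mathcal{U}$ such that for every $(x,y)\in X\times X\setminus 0_\mathcal{U}$, the set $\bigcap\{A\in\mathcal{A} : (x,y)\in A\}$ belongs to $\mathcal{U}$. Then $\mathcal{B} := \overline{\mathcal{A}}\setminus\{0_\mathcal{U}\}$ is a base for $\mathcal{U}$, where $\overline{\mathcal{A}}=\{\bigcap\mathcal{S}:\emptyset\neq\mathcal{S}\subseteq\mathcal{A}_s\}$ and $\mathcal{A}_s=\{(A\cap A^{-1})\cup\Delta_X : A\in\mathcal{A}\}$.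 -/
open Set

/-- if `𝒜` is a base of a non-trivial uniform structure `𝒰` such that
`⋂ {A ∈ 𝒜 : (x,y) ∈ A} ∈ 𝒰` for each `(x,y) ∉ ⋂𝒰`, then
`ℬ := \overline{𝒜} \ {⋂𝒰}` is a base for `𝒰`. -/
theorem stmt17 {X : Type*} (U : Set (Set (X × X))) (hU : IsUniformStructure U)
    (hnt : ⋂₀ U ∉ U)
    (A : Set (Set (X × X))) (hAU : A ⊆ U) (hAbase : ∀ V ∈ U, ∃ B ∈ A, B ⊆ V)
    (hA : ∀ p : X × X, p ∉ ⋂₀ U → ⋂₀ {B | B ∈ A ∧ p ∈ B} ∈ U) :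
    interClos A \ {⋂₀ U} ⊆ U ∧
    ∀ V ∈ U, ∃ C ∈ interClos A \ {⋂₀ U}, C ⊆ V := by
  obtain ⟨hdiag, hsup, hint, hinv, _⟩ := hU
  constructor
  · rintro C ⟨⟨S, hSne, hSsub, rfl⟩, hCne⟩
    have hIsubS : ⋂₀ U ⊆ ⋂₀ S := by
      intro q hq
      rw [mem_sInter]
      intro E hE
      obtain ⟨B, hB, rfl⟩ := hSsub hE
      exact Or.inl ⟨hq B (hAU hB), hq _ (hinv B (hAU hB))⟩
    have hne : ¬ (⋂₀ S ⊆ ⋂₀ U) := by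
      intro h
      exact hCne (mem_singleton_iff.mpr (Subset.antisymm h hIsubS))
    obtain ⟨p, hpS, hpU⟩ := not_subset.mp hne
    have hpnd : p ∉ relDiag X := by
      intro hpd
      exact hpU (mem_sInter.mpr fun V hV => hdiag V hV hpd)
    set D := ⋂₀ {B | B ∈ A ∧ p ∈ B} with hD
    have hDU : D ∈ U := hA p hpU
    have hDsym : D ∩ relInv D ∈ U := hint D hDU _ (hinv D hDU)
    refine hsup _ hDsym _ ?_
    intro q hq
    rw [mem_sInter]
    intro E hE
    obtain ⟨B, hB, rfl⟩ := hSsub hE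
    have hpB : p ∈ (B ∩ relInv B) ∪ relDiag X := mem_sInter.mp hpS _ hE
    rcases hpB with hpB | hpB
    · have hDB : D ⊆ B := sInter_subset_of_mem ⟨hB, hpB.1⟩
      exact Or.inl ⟨hDB hq.1, hDB hq.2⟩
    · exact absurd hpB hpnd
  · intro V hV
    obtain ⟨B, hBA, hBV⟩ := hAbase V hV
    refine ⟨(B ∩ relInv B) ∪ relDiag X, ⟨⟨{(B ∩ relInv B) ∪ relDiag X},
      singleton_nonempty _, ?_, (sInter_singleton _).symm⟩, ?_⟩, ?_⟩
    · exact singleton_subset_iff.mpr ⟨B, hBA, rfl⟩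
    · intro h
      rw [mem_singleton_iff] at h
      have : (B ∩ relInv B) ∪ relDiag X ∈ U :=
        hsup _ (hint B (hAU hBA) _ (hinv B (hAU hBA))) _ subset_union_left
      rw [h] at this
      exact hnt this
    · exact union_subset (fun q hq => hBV hq.1) (hdiag V hV)
end
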